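/- arXiv:1707.02151 — 3 statements merged into one kernel-verified Lean document; each statement's English description precedes it below -/
import Mathlib

section
/- Let $\Gamma$ be a finite connected graph, and for a function $f: V\Gamma \to \mathbb{R}$ define $\nabla f(x) = \max\{|f(x)-f(y)| : xy \in E\Gamma\}$. Define $h^p(\Gamma) = \inf \{\|\nabla f\|_p / \|f\|_p : \sum_{v} f(v) = 0, f \not\equiv 0\}$. Then for every $p \in [1,\infty)$, $h^p(\Gamma)^p \leq 2^p h^1(\Gamma)$. -/
/-!
For a mean-zero test function `f`, put `g = sign f · |f|^{1/p}` and recentre it to the mean-zero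
function `h = g - c`. The elementary inequality
`|sign a |a|^{1/p} - sign b |b|^{1/p}|^p ≤ 2^{p-1} |a - b|` gives `‖∇h‖_p^p ≤ 2^{p-1} ‖∇f‖_1`.
Recentring loses at most half the mass: as `∑ f = 0`, the vertices where `f` has the sign
opposite to `c` carry half of `‖f‖_1`, and there `|h|^p ≥ |g|^p = |f|`. Hence the `p`-th power
of the `L^p` quotient of `h` is at most `2^p` times the `L^1` quotient of `f`.
-/

open Finset

/-- The max-over-neighbours gradient of a function on a graph. -/
noncomputable def gradMax {V : Type*} (G : SimpleGraph V) (f : V → ℝ) (x : V) : ℝ :=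
  sSup ((fun y => |f x - f y|) '' {y | G.Adj x y})

/-- The `ℓ^p` norm of a function on the (finite) vertex set. -/
noncomputable def lpNorm {V : Type*} [Fintype V] (p : ℝ) (g : V → ℝ) : ℝ :=
  (∑ v, |g v| ^ p) ^ (1 / p)

/-- The `L^p` Poincaré constant of a finite graph. -/
noncomputable def poincareConst {V : Type*} [Fintype V] (G : SimpleGraph V) (p : ℝ) : ℝ :=
  sInf {r : ℝ | ∃ f : V → ℝ, (∑ v, f v) = 0 ∧ f ≠ 0 ∧
    r = lpNorm p (gradMax G f) / lpNorm p f}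

namespace Real

theorem rpow_add_le_mul_rpow_add_rpow {p x y : ℝ} (hx : 0 ≤ x) (hy : 0 ≤ y) (hp : 1 ≤ p) :
    (x + y) ^ p ≤ 2 ^ (p - 1) * (x ^ p + y ^ p) := by
  lift x to NNReal using hx
  lift y to NNReal using hy
  exact_mod_cast NNReal.rpow_add_le_mul_rpow_add_rpow x y hp

theorem abs_sub_rpow_le_abs_rpow_sub {p x y : ℝ} (hx : 0 ≤ x) (hy : 0 ≤ y) (hp : 1 ≤ p) :
    |x - y| ^ p ≤ |x ^ p - y ^ p| := by
  wlog hyx : y ≤ x generalizing x y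
  · rw [abs_sub_comm, abs_sub_comm (x ^ p)]
    exact this hy hx (le_of_not_ge hyx)
  have h := add_rpow_le_rpow_add (sub_nonneg.2 hyx) hy hp
  rw [sub_add_cancel] at h
  rw [abs_of_nonneg (sub_nonneg.2 hyx),
    abs_of_nonneg (sub_nonneg.2 (rpow_le_rpow hy hyx (by linarith)))]
  linarith

theorem sInf_image_rpow_le_mul_sInf_image {ι : Type*} {s : Set ι} {F G : ι → ℝ} {p C : ℝ}
    (hp : 0 < p) (hC : 0 < C) (hF : ∀ i ∈ s, 0 ≤ F i)
    (h : ∀ i ∈ s, ∃ j ∈ s, F j ^ p ≤ C * G i) :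
    sInf (F '' s) ^ p ≤ C * sInf (G '' s) := by
  rcases s.eq_empty_or_nonempty with rfl | hs
  · simp [zero_rpow hp.ne']
  have hF' : ∀ r ∈ F '' s, 0 ≤ r := by
    rintro _ ⟨i, hi, rfl⟩
    exact hF i hi
  rw [← div_le_iff₀' hC]
  refine le_csInf (hs.image G) ?_
  rintro _ ⟨i, hi, rfl⟩
  obtain ⟨j, hj, hji⟩ := h i hi
  rw [div_le_iff₀' hC]
  exact (rpow_le_rpow (sInf_nonneg hF') (csInf_le ⟨0, hF'⟩ ⟨j, hj, rfl⟩) hp.le).trans hji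

end Real

theorem half_sum_abs_le_sum_of_negPart_le {ι : Type*} [Fintype ι] {f b : ι → ℝ}
    (hsum : ∑ i, f i = 0) (hb : ∀ i, (f i)⁻ ≤ b i) :
    (∑ i, |f i|) / 2 ≤ ∑ i, b i := by
  have hparts : ∑ i, (f i)⁺ - ∑ i, (f i)⁻ = 0 := by
    simpa only [← sum_sub_distrib, posPart_sub_negPart] using hsum
  have habs : ∑ i, (f i)⁺ + ∑ i, (f i)⁻ = ∑ i, |f i| := by
    simp only [← sum_add_distrib, posPart_add_negPart]
  linarith [sum_le_sum fun i (_ : i ∈ univ) => hb i]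

noncomputable def signedRoot (p t : ℝ) : ℝ :=
  SignType.sign t * |t| ^ p⁻¹

section signedRoot

variable {p : ℝ}

theorem signedRoot_neg (t : ℝ) : signedRoot p (-t) = -signedRoot p t := by
  simp only [signedRoot, Left.sign_neg, SignType.coe_neg, abs_neg, neg_mul]

theorem signedRoot_of_nonneg (hp : p ≠ 0) {t : ℝ} (ht : 0 ≤ t) :
    signedRoot p t = t ^ p⁻¹ := by
  rcases ht.eq_or_lt with rfl | ht
  · simp [signedRoot, Real.zero_rpow (inv_ne_zero hp)]
  · simp [signedRoot, sign_pos ht, abs_of_pos ht]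

theorem signedRoot_nonpos (hp : p ≠ 0) {t : ℝ} (ht : t ≤ 0) : signedRoot p t ≤ 0 := by
  rw [← neg_neg t, signedRoot_neg, signedRoot_of_nonneg hp (neg_nonneg.2 ht), neg_nonpos]
  exact Real.rpow_nonneg (neg_nonneg.2 ht) _

theorem abs_signedRoot_rpow (hp : p ≠ 0) (t : ℝ) : |signedRoot p t| ^ p = |t| := by
  wlog ht : 0 ≤ t generalizing t
  · simpa only [signedRoot_neg, abs_neg] using this (-t) (by linarith)
  rw [signedRoot_of_nonneg hp ht, abs_of_nonneg (Real.rpow_nonneg ht _),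
    Real.rpow_inv_rpow ht hp, abs_of_nonneg ht]

theorem abs_signedRoot_sub_rpow_le_of_nonneg (hp : 1 ≤ p) {a : ℝ} (ha : 0 ≤ a) (b : ℝ) :
    |signedRoot p a - signedRoot p b| ^ p ≤ 2 ^ (p - 1) * |a - b| := by
  have hp0 : p ≠ 0 := by positivity
  rw [signedRoot_of_nonneg hp0 ha]
  rcases le_total 0 b with hb | hb
  · rw [signedRoot_of_nonneg hp0 hb]
    calc |a ^ p⁻¹ - b ^ p⁻¹| ^ p ≤ |(a ^ p⁻¹) ^ p - (b ^ p⁻¹) ^ p| :=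
          Real.abs_sub_rpow_le_abs_rpow_sub (by positivity) (by positivity) hp
      _ = |a - b| := by rw [Real.rpow_inv_rpow ha hp0, Real.rpow_inv_rpow hb hp0]
      _ ≤ 2 ^ (p - 1) * |a - b| :=
          le_mul_of_one_le_left (abs_nonneg _) (Real.one_le_rpow one_le_two (by linarith))
  · obtain ⟨c, hc, rfl⟩ : ∃ c, 0 ≤ c ∧ b = -c := ⟨-b, by linarith, by ring⟩
    rw [signedRoot_neg, signedRoot_of_nonneg hp0 hc, sub_neg_eq_add, sub_neg_eq_add,
      abs_of_nonneg (by positivity), abs_of_nonneg (by linarith)]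
    calc (a ^ p⁻¹ + c ^ p⁻¹) ^ p ≤ 2 ^ (p - 1) * ((a ^ p⁻¹) ^ p + (c ^ p⁻¹) ^ p) :=
          Real.rpow_add_le_mul_rpow_add_rpow (by positivity) (by positivity) hp
      _ = 2 ^ (p - 1) * (a + c) := by rw [Real.rpow_inv_rpow ha hp0, Real.rpow_inv_rpow hc hp0]

theorem abs_signedRoot_sub_rpow_le (hp : 1 ≤ p) (a b : ℝ) :
    |signedRoot p a - signedRoot p b| ^ p ≤ 2 ^ (p - 1) * |a - b| := by
  rcases le_total 0 a with ha | ha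
  · exact abs_signedRoot_sub_rpow_le_of_nonneg hp ha b
  · have h := abs_signedRoot_sub_rpow_le_of_nonneg hp (neg_nonneg.2 ha) (-b)
    rwa [signedRoot_neg, signedRoot_neg, neg_sub_neg, neg_sub_neg, abs_sub_comm,
      abs_sub_comm b] at h

theorem half_sum_abs_le_sum_abs_signedRoot_sub_rpow {ι : Type*} [Fintype ι] (hp : 0 < p)
    {f : ι → ℝ} (hsum : ∑ i, f i = 0) (c : ℝ) :
    (∑ i, |f i|) / 2 ≤ ∑ i, |signedRoot p (f i) - c| ^ p := by
  wlog hc : 0 ≤ c generalizing f c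
  · have h := this (f := -f) (by simp [hsum]) (-c) (by linarith)
    simpa only [Pi.neg_apply, abs_neg, signedRoot_neg, ← neg_add', abs_neg, ← sub_eq_add_neg]
      using h
  refine half_sum_abs_le_sum_of_negPart_le hsum fun i => ?_
  rw [negPart_def]
  refine max_le ?_ (by positivity)
  rcases le_total (f i) 0 with hf | hf
  · have hg := signedRoot_nonpos hp.ne' hf
    calc -f i = |signedRoot p (f i)| ^ p := by rw [abs_signedRoot_rpow hp.ne', abs_of_nonpos hf]
      _ ≤ |signedRoot p (f i) - c| ^ p := by
          refine Real.rpow_le_rpow (abs_nonneg _) ?_ hp.le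
          rw [abs_of_nonpos hg, abs_of_nonpos (by linarith)]
          linarith
  · linarith [Real.rpow_nonneg (abs_nonneg (signedRoot p (f i) - c)) p]

end signedRoot

section gradMax

variable {V : Type*} (G : SimpleGraph V)

theorem gradMax_sub_const (f : V → ℝ) (c : ℝ) :
    gradMax G (fun v => f v - c) = gradMax G f := by
  ext x
  simp only [gradMax, sub_sub_sub_cancel_right]

theorem gradMax_nonneg (f : V → ℝ) (x : V) : 0 ≤ gradMax G f x :=
  Real.sSup_nonneg (by rintro _ ⟨y, -, rfl⟩; exact abs_nonneg _)

theorem abs_sub_le_gradMax [Finite V] (f : V → ℝ) {x y : V} (hxy : G.Adj x y) :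
    |f x - f y| ≤ gradMax G f x :=
  le_csSup (Set.toFinite _).bddAbove ⟨y, hxy, rfl⟩

theorem gradMax_rpow_le_mul [Finite V] {f g : V → ℝ} {p C : ℝ} (hp : 0 < p) (hC : 0 ≤ C)
    (h : ∀ x y, G.Adj x y → |g x - g y| ^ p ≤ C * |f x - f y|) (x : V) :
    gradMax G g x ^ p ≤ C * gradMax G f x := by
  have hCf : 0 ≤ C * gradMax G f x := mul_nonneg hC (gradMax_nonneg G f x)
  rw [← Real.le_rpow_inv_iff_of_pos (gradMax_nonneg G g x) hCf hp]
  refine Real.sSup_le ?_ (by positivity)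
  rintro _ ⟨y, hy, rfl⟩
  rw [Real.le_rpow_inv_iff_of_pos (abs_nonneg _) hCf hp]
  exact (h x y hy).trans (mul_le_mul_of_nonneg_left (abs_sub_le_gradMax G f hy) hC)

end gradMax

section poincare

variable {V : Type*} [Fintype V]

theorem lpNorm_nonneg (p : ℝ) (g : V → ℝ) : 0 ≤ lpNorm p g :=
  Real.rpow_nonneg (sum_nonneg fun _ _ => Real.rpow_nonneg (abs_nonneg _) _) _

theorem lpNorm_rpow {p : ℝ} (hp : p ≠ 0) (g : V → ℝ) :
    lpNorm p g ^ p = ∑ v, |g v| ^ p := by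
  rw [lpNorm, ← Real.rpow_mul (sum_nonneg fun _ _ => Real.rpow_nonneg (abs_nonneg _) _),
    one_div_mul_cancel hp, Real.rpow_one]

theorem lpNorm_one (g : V → ℝ) : lpNorm 1 g = ∑ v, |g v| := by
  simp [lpNorm]

theorem sum_sub_mean [Nonempty V] (g : V → ℝ) :
    ∑ v, (g v - (∑ w, g w) / Fintype.card V) = 0 := by
  rw [sum_sub_distrib, sum_const, card_univ, nsmul_eq_mul,
    mul_div_cancel₀ _ (Nat.cast_ne_zero.2 Fintype.card_ne_zero), sub_self]

noncomputable def poincareQuotient (G : SimpleGraph V) (p : ℝ) (f : V → ℝ) : ℝ :=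
  lpNorm p (gradMax G f) / lpNorm p f

variable (G : SimpleGraph V)

theorem poincareConst_eq_sInf_image (p : ℝ) :
    poincareConst G p = sInf (poincareQuotient G p '' {f | ∑ v, f v = 0 ∧ f ≠ 0}) := by
  refine congrArg sInf (Set.ext fun r => ?_)
  simp only [Set.mem_ofPred_eq, Set.mem_image, poincareQuotient, and_assoc, eq_comm]

theorem poincareQuotient_nonneg (p : ℝ) (f : V → ℝ) : 0 ≤ poincareQuotient G p f :=
  div_nonneg (lpNorm_nonneg _ _) (lpNorm_nonneg _ _)

theorem poincareQuotient_rpow {p : ℝ} (hp : 0 < p) (f : V → ℝ) :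
    poincareQuotient G p f ^ p = (∑ v, |gradMax G f v| ^ p) / ∑ v, |f v| ^ p := by
  rw [poincareQuotient, Real.div_rpow (lpNorm_nonneg _ _) (lpNorm_nonneg _ _),
    lpNorm_rpow hp.ne', lpNorm_rpow hp.ne']

theorem exists_poincareQuotient_rpow_le {p : ℝ} (hp : 1 ≤ p) {f : V → ℝ}
    (hsum : ∑ v, f v = 0) (hf : f ≠ 0) :
    ∃ h : V → ℝ, (∑ v, h v = 0 ∧ h ≠ 0) ∧
      poincareQuotient G p h ^ p ≤ 2 ^ p * poincareQuotient G 1 f := by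
  have hp0 : 0 < p := by linarith
  obtain ⟨u, hu⟩ := Function.ne_iff.1 hf
  have : Nonempty V := ⟨u⟩
  set g : V → ℝ := fun v => signedRoot p (f v)
  set h : V → ℝ := fun v => g v - (∑ w, g w) / Fintype.card V
  have hgrad : ∑ v, |gradMax G h v| ^ p ≤ 2 ^ (p - 1) * ∑ v, |gradMax G f v| := by
    rw [mul_sum]
    refine sum_le_sum fun v _ => ?_
    rw [gradMax_sub_const, abs_of_nonneg (gradMax_nonneg G g v),
      abs_of_nonneg (gradMax_nonneg G f v)]
    exact gradMax_rpow_le_mul G hp0 (by positivity)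
      (fun x y _ => abs_signedRoot_sub_rpow_le hp (f x) (f y)) v
  have hmass : (∑ v, |f v|) / 2 ≤ ∑ v, |h v| ^ p :=
    half_sum_abs_le_sum_abs_signedRoot_sub_rpow hp0 hsum _
  have hf_pos : 0 < ∑ v, |f v| :=
    sum_pos' (fun v _ => abs_nonneg _) ⟨u, mem_univ u, abs_pos.2 hu⟩
  refine ⟨h, ⟨sum_sub_mean g, fun h0 => ?_⟩, ?_⟩
  · simp only [h0, Pi.zero_apply, abs_zero, Real.zero_rpow hp0.ne', sum_const_zero] at hmass
    linarith
  calc poincareQuotient G p h ^ p = (∑ v, |gradMax G h v| ^ p) / ∑ v, |h v| ^ p :=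
        poincareQuotient_rpow G hp0 h
    _ ≤ (2 ^ (p - 1) * ∑ v, |gradMax G f v|) / ((∑ v, |f v|) / 2) :=
        div_le_div₀ (by positivity) hgrad (by positivity) hmass
    _ = 2 ^ p * poincareQuotient G 1 f := by
        rw [poincareQuotient, lpNorm_one, lpNorm_one, Real.rpow_sub_one two_ne_zero]
        field_simp

end poincare

theorem stmt4_general {V : Type*} [Fintype V] (G : SimpleGraph V)
    (p : ℝ) (hp : 1 ≤ p) :
    (poincareConst G p) ^ p ≤ 2 ^ p * poincareConst G 1 := by
  rw [poincareConst_eq_sInf_image, poincareConst_eq_sInf_image]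
  refine Real.sInf_image_rpow_le_mul_sInf_image (by linarith) (by positivity)
    (fun f _ => poincareQuotient_nonneg G p f) ?_
  rintro f ⟨hsum, hf⟩
  exact exists_poincareQuotient_rpow_le G hp hsum hf

/-- For a finite connected graph, `h^p(Γ)^p ≤ 2^p h^1(Γ)`. -/
theorem stmt4 {V : Type*} [Fintype V] (G : SimpleGraph V) (hconn : G.Connected)
    (p : ℝ) (hp : 1 ≤ p) :
    (poincareConst G p) ^ p ≤ 2 ^ p * poincareConst G 1 :=
  stmt4_general G p hp
end

section
/- For every real $s, t$ and every $\alpha \geq 1$, defining $\{a\}^\alpha = \mathrm{sign}(a)|a|^\alpha$, we have $|\{s\}^\alpha - \{t\}^\alpha| \leq \alpha(|s|^{\alpha-1} + |t|^{\alpha-1})|s - t|$. -/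
/-- The signed power `{a}^α = sign(a) |a|^α`. -/
noncomputable def spow (a α : ℝ) : ℝ := Real.sign a * |a| ^ α

lemma spow_nonneg_eq {a : ℝ} (ha : 0 ≤ a) (α : ℝ) (hα : 1 ≤ α) : spow a α = a ^ α := by
  rcases ha.lt_or_eq with h | h
  · simp [spow, Real.sign_of_pos h, abs_of_pos h]
  · simp [spow, ← h, Real.zero_rpow (by linarith : α ≠ 0)]

lemma spow_nonpos_eq {a : ℝ} (ha : a ≤ 0) (α : ℝ) (hα : 1 ≤ α) : spow a α = -(-a) ^ α := by
  rcases ha.lt_or_eq with h | h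
  · simp [spow, Real.sign_of_neg h, abs_of_neg h]
  · simp [spow, h, Real.zero_rpow (by linarith : α ≠ 0)]

/-- Gradient inequality for `x^α` on nonnegatives. -/
lemma key {α : ℝ} (hα : 1 ≤ α) {a b : ℝ} (hb : 0 ≤ b) (hba : b ≤ a) :
    a ^ α - b ^ α ≤ α * a ^ (α - 1) * (a - b) := by
  rcases (hb.trans hba).lt_or_eq with ha | ha
  · have hber := one_add_mul_self_le_rpow_one_add
      (s := b / a - 1) (by have : 0 ≤ b / a := div_nonneg hb ha.le; linarith) hα
    rw [add_sub_cancel] at hber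
    have hda : (b / a) ^ α = b ^ α / a ^ α := Real.div_rpow hb ha.le α
    rw [hda] at hber
    have haα : (0:ℝ) < a ^ α := Real.rpow_pos_of_pos ha α
    have h2 : (1 + α * (b / a - 1)) * a ^ α ≤ b ^ α := by
      calc (1 + α * (b / a - 1)) * a ^ α ≤ (b ^ α / a ^ α) * a ^ α := by
            exact mul_le_mul_of_nonneg_right hber haα.le
        _ = b ^ α := by field_simp
    have hsplit : a ^ α = a ^ (α - 1) * a := by
      rw [← Real.rpow_add_one ha.ne' (α - 1)]; ring_nf
    have h3 : (b / a - 1) * a ^ α = (b - a) * a ^ (α - 1) := by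
      rw [hsplit]; field_simp
    calc a ^ α - b ^ α ≤ a ^ α - (1 + α * (b / a - 1)) * a ^ α := by linarith
      _ = -(α * ((b / a - 1) * a ^ α)) := by ring
      _ = -(α * ((b - a) * a ^ (α - 1))) := by rw [h3]
      _ = α * a ^ (α - 1) * (a - b) := by ring
  · have hb0 : b = 0 := le_antisymm (ha ▸ hba) hb
    subst hb0
    simp [← ha]

/-- Two-sided version for nonnegatives. -/
lemma key2 {α : ℝ} (hα : 1 ≤ α) {a b : ℝ} (ha : 0 ≤ a) (hb : 0 ≤ b) :
    |a ^ α - b ^ α| ≤ α * (a ^ (α - 1) + b ^ (α - 1)) * |a - b| := by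
  have hα0 : (0:ℝ) < α := by linarith
  wlog hba : b ≤ a generalizing a b
  · rw [abs_sub_comm, abs_sub_comm a b]
    have := this hb ha (le_of_not_ge hba)
    linarith [this]
  rw [abs_of_nonneg (by
      have := Real.rpow_le_rpow hb hba hα0.le
      linarith), abs_of_nonneg (by linarith)]
  have h1 := key hα hb hba
  have h2 : α * a ^ (α - 1) * (a - b) ≤ α * (a ^ (α - 1) + b ^ (α - 1)) * (a - b) := by
    have h0 := Real.rpow_nonneg hb (α - 1)
    nlinarith [mul_nonneg (mul_nonneg hα0.le h0) (sub_nonneg.mpr hba)]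
  linarith

/-- For opposite signs. -/
lemma key3 {α : ℝ} (hα : 1 ≤ α) {a b : ℝ} (ha : 0 ≤ a) (hb : 0 ≤ b) :
    a ^ α + b ^ α ≤ α * (a ^ (α - 1) + b ^ (α - 1)) * (a + b) := by
  have hsa : a ^ α = a ^ (α - 1) * a := by
    rcases ha.lt_or_eq with h | h
    · rw [← Real.rpow_add_one h.ne' (α - 1)]; ring_nf
    · rw [← h, Real.zero_rpow (by linarith : α ≠ 0), mul_zero]
  have hsb : b ^ α = b ^ (α - 1) * b := by
    rcases hb.lt_or_eq with h | h
    · rw [← Real.rpow_add_one h.ne' (α - 1)]; ring_nf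
    · rw [← h, Real.zero_rpow (by linarith : α ≠ 0), mul_zero]
  have h1 := Real.rpow_nonneg ha (α - 1)
  have h2 := Real.rpow_nonneg hb (α - 1)
  nlinarith [mul_nonneg h1 hb, mul_nonneg h2 ha,
    mul_nonneg (mul_nonneg (sub_nonneg.mpr hα) (add_nonneg h1 h2)) (add_nonneg ha hb)]

/-- Matoušek's mean-value inequality for signed powers. -/
theorem stmt6 (s t α : ℝ) (hα : 1 ≤ α) :
    |spow s α - spow t α| ≤ α * (|s| ^ (α - 1) + |t| ^ (α - 1)) * |s - t| := by
  rcases le_total 0 s with hs | hs <;> rcases le_total 0 t with ht | ht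
  · rw [spow_nonneg_eq hs α hα, spow_nonneg_eq ht α hα,
      abs_of_nonneg hs, abs_of_nonneg ht]
    exact key2 hα hs ht
  · rw [spow_nonneg_eq hs α hα, spow_nonpos_eq ht α hα,
      abs_of_nonneg hs, abs_of_nonpos ht]
    have h3 := key3 hα hs (neg_nonneg.mpr ht)
    have habs : |s - t| = s + -t := abs_of_nonneg (by linarith)
    rw [habs, sub_neg_eq_add]
    rw [abs_of_nonneg (add_nonneg (Real.rpow_nonneg hs α) (Real.rpow_nonneg (neg_nonneg.mpr ht) α))]
    linarith
  · rw [spow_nonpos_eq hs α hα, spow_nonneg_eq ht α hα,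
      abs_of_nonpos hs, abs_of_nonneg ht]
    have h3 := key3 hα (neg_nonneg.mpr hs) ht
    have habs : |s - t| = -s + t := by rw [abs_of_nonpos (by linarith)]; ring
    rw [habs]
    have : -(-s) ^ α - t ^ α = -((-s) ^ α + t ^ α) := by ring
    rw [this, abs_neg, abs_of_nonneg (add_nonneg (Real.rpow_nonneg (neg_nonneg.mpr hs) α) (Real.rpow_nonneg ht α))]
    linarith
  · rw [spow_nonpos_eq hs α hα, spow_nonpos_eq ht α hα,
      abs_of_nonpos hs, abs_of_nonpos ht]
    have h := key2 hα (neg_nonneg.mpr hs) (neg_nonneg.mpr ht)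
    have e1 : -(-s) ^ α - -(-t) ^ α = -((-s) ^ α - (-t) ^ α) := by ring
    have e2 : |(-s) - (-t)| = |s - t| := by rw [← abs_neg]; ring_nf
    rw [e1, abs_neg]
    calc |(-s) ^ α - (-t) ^ α| ≤ α * ((-s) ^ (α-1) + (-t) ^ (α-1)) * |(-s) - (-t)| := h
      _ = α * ((-s) ^ (α-1) + (-t) ^ (α-1)) * |s - t| := by rw [e2]
end

section
/- Let $\Gamma$ be a finite graph with maximum degree at most $3$ on $r \geq 4$ vertices that is a subtree of the $3$-regular tree. Then there exists a function $f: V\Gamma \to \{-1,0,1\}$ with $\sum_{e \in E\Gamma} |f(x_e) - f(y_e)|^p \leq 3 \cdot 2^p$ for all $p \geq 1$, and such that both $|f^{-1}(1)| \geq r/4 - 1$ and $|f^{-1}(-1)| \geq r/4 - 1$. -/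
/-!
Cut the tree at one edge `uv` and put `f = 1` on the side of `v` and `f = -1` on the side of `u`;
then only the edge `uv` contributes to the energy. To make both sides large, orient the edges so
that the `v`-side has at most `r/2` vertices and take one whose `v`-side is largest. If that side
had fewer than `(r - 1)/3` vertices, then, as `u` has at most two other neighbours `w`, some
`w`-side would be larger; either it or its complement, which contains `u` and the `v`-side,
would contradict maximality.
-/

open Finset

namespace SimpleGraph

variable {V : Type*} [Fintype V] {G : SimpleGraph V} {u v w x y : V}

open scoped Classical in
noncomputable def side (G : SimpleGraph V) (u v : V) : Finset V :=
  {x | (G.deleteEdges {s(u, v)}).Reachable v x}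

@[simp]
lemma mem_side : x ∈ G.side u v ↔ (G.deleteEdges {s(u, v)}).Reachable v x := by
  simp [side]

lemma self_mem_side : v ∈ G.side u v := mem_side.2 .rfl

lemma notMem_side (hG : G.IsAcyclic) (huv : G.Adj u v) : u ∉ G.side u v := fun hu ↦
  isAcyclic_iff_forall_adj_isBridge.1 hG huv (mem_side.1 hu).symm

lemma mem_side_of_adj (hx : x ∈ G.side u v) (hxy : G.Adj x y) (hne : s(x, y) ≠ s(u, v)) :
    y ∈ G.side u v :=
  mem_side.2 <| (mem_side.1 hx).trans <| Adj.reachable <| deleteEdges_adj.2 ⟨hxy, hne⟩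

lemma eq_of_adj_of_mem_side_of_notMem (hG : G.IsAcyclic) (huv : G.Adj u v) (hxy : G.Adj x y)
    (hx : x ∈ G.side u v) (hy : y ∉ G.side u v) : x = v ∧ y = u := by
  have : s(x, y) = s(u, v) := by_contra fun hne ↦ hy (mem_side_of_adj hx hxy hne)
  rcases Sym2.eq_iff.1 this with ⟨rfl, -⟩ | h
  · exact absurd hx (notMem_side hG huv)
  · exact h

lemma reachable_deleteEdges_of_mem_side (hG : G.IsAcyclic) (huv : G.Adj u v)
    (hx : x ∈ G.side u v) (w : V) : (G.deleteEdges {s(u, w)}).Reachable v x := by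
  classical
  obtain ⟨p⟩ := mem_side.1 hx
  have hu : u ∉ p.support := fun hu ↦
    notMem_side hG huv (mem_side.2 (p.takeUntil u hu).reachable)
  refine ⟨p.transfer _ fun e he ↦ ?_⟩
  have he' := p.edges_subset_edgeSet he
  rw [edgeSet_deleteEdges] at he' ⊢
  exact ⟨he'.1, fun h ↦ hu (p.fst_mem_support_of_mem_edges (Set.mem_singleton_iff.1 h ▸ he))⟩

lemma disjoint_side (hG : G.IsAcyclic) (hv : G.Adj u v) (hw : G.Adj u w) (hvw : v ≠ w) :
    Disjoint (G.side u v) (G.side u w) := by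
  refine Finset.disjoint_left.2 fun _ hxv hxw ↦ notMem_side hG hw (mem_side.2 ?_)
  have hvu : (G.deleteEdges {s(u, w)}).Adj v u :=
    deleteEdges_adj.2 ⟨hv.symm, by simp [hvw, hv.ne']⟩
  exact ((mem_side.1 hxw).trans (reachable_deleteEdges_of_mem_side hG hv hxv w).symm).trans
    hvu.reachable

lemma eq_or_exists_adj_mem_side (hc : G.Connected) (u x : V) :
    x = u ∨ ∃ w, G.Adj u w ∧ x ∈ G.side u w := by
  obtain ⟨p⟩ := hc.preconnected x u
  induction p with
  | nil => exact .inl rfl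
  | @cons a b c hab q ih =>
    rcases ih with rfl | ⟨w, hw, hb⟩
    · exact .inr ⟨a, hab.symm, self_mem_side⟩
    by_cases hne : s(b, a) = s(c, w)
    · rcases Sym2.eq_iff.1 hne with ⟨-, rfl⟩ | ⟨-, rfl⟩
      · exact .inr ⟨a, hw, self_mem_side⟩
      · exact .inl rfl
    · exact .inr ⟨w, hw, mem_side_of_adj hb hab.symm hne⟩

variable [DecidableEq V]

lemma side_eq_compl_side (hG : G.IsAcyclic) (hc : G.Connected) (huv : G.Adj u v) :
    G.side v u = (G.side u v)ᶜ := by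
  have hdel : G.deleteEdges {s(v, u)} = G.deleteEdges {s(u, v)} := by rw [Sym2.eq_swap]
  ext x
  rw [mem_compl, mem_side, hdel]
  constructor
  · exact fun hx hx' ↦ isAcyclic_iff_forall_adj_isBridge.1 hG huv (hx.trans (mem_side.1 hx').symm)
  · intro hx
    rcases eq_or_exists_adj_mem_side hc u x with rfl | ⟨w, hw, hxw⟩
    · rfl
    have hwv : w ≠ v := by rintro rfl; exact hx hxw
    have huw : (G.deleteEdges {s(u, v)}).Adj u w := deleteEdges_adj.2 ⟨hw, by simp [hwv, hw.ne']⟩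
    exact huw.reachable.trans (reachable_deleteEdges_of_mem_side hG hw hxw v)

lemma card_side_add_card_side (hG : G.IsAcyclic) (hc : G.Connected) (huv : G.Adj u v) :
    #(G.side u v) + #(G.side v u) = Fintype.card V := by
  rw [side_eq_compl_side hG hc huv, card_add_card_compl]

variable [DecidableRel G.Adj]

lemma sum_card_side_add_one (hG : G.IsAcyclic) (hc : G.Connected) (u : V) :
    ∑ w ∈ G.neighborFinset u, #(G.side u w) + 1 = Fintype.card V := by
  have hcover : insert u ((G.neighborFinset u).biUnion (G.side u)) = univ := by
    refine eq_univ_of_forall fun x ↦ ?_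
    simpa [mem_insert, mem_biUnion] using eq_or_exists_adj_mem_side hc u x
  have hu : u ∉ (G.neighborFinset u).biUnion (G.side u) := by
    simpa using fun w hw ↦ notMem_side hG hw
  rw [← card_univ, ← hcover, card_insert_of_notMem hu, card_biUnion]
  intro v hv w hw hvw
  exact disjoint_side hG ((mem_neighborFinset ..).1 hv) ((mem_neighborFinset ..).1 hw) hvw

lemma exists_adj_card_side_lt (hG : G.IsTree) (hdeg : G.degree u ≤ 3) (huv : G.Adj u v)
    (hsmall : 3 * #(G.side u v) + 1 < Fintype.card V) :
    ∃ a b, G.Adj a b ∧ 2 * #(G.side a b) ≤ Fintype.card V ∧ #(G.side u v) < #(G.side a b) := by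
  have hvN : v ∈ G.neighborFinset u := (mem_neighborFinset ..).2 huv
  obtain ⟨w, hwN, hvw⟩ : ∃ w ∈ (G.neighborFinset u).erase v, #(G.side u v) < #(G.side u w) := by
    refine exists_lt_of_sum_lt ?_
    have hsum := sum_card_side_add_one hG.isAcyclic hG.connected u
    rw [← add_sum_erase _ _ hvN] at hsum
    have hcard : #((G.neighborFinset u).erase v) ≤ 2 := by
      rw [card_erase_of_mem hvN, card_neighborFinset_eq_degree]; omega
    rw [sum_const, smul_eq_mul]
    nlinarith
  obtain ⟨hwv, hw⟩ := mem_erase.1 hwN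
  rw [mem_neighborFinset] at hw
  by_cases hw2 : 2 * #(G.side u w) ≤ Fintype.card V
  · exact ⟨u, w, hw, hw2, hvw⟩
  have hsub : insert u (G.side u v) ⊆ G.side w u := by
    rw [side_eq_compl_side hG.isAcyclic hG.connected hw, subset_compl_iff_disjoint_right,
      disjoint_insert_left]
    exact ⟨notMem_side hG.isAcyclic hw, disjoint_side hG.isAcyclic huv hw hwv.symm⟩
  have hwu := card_le_card hsub
  rw [card_insert_of_notMem (notMem_side hG.isAcyclic huv)] at hwu
  have := card_side_add_card_side hG.isAcyclic hG.connected hw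
  exact ⟨w, u, hw.symm, by omega, by omega⟩

lemma exists_adj_balanced_side (hG : G.IsTree) (hdeg : ∀ v, G.degree v ≤ 3)
    (hV : 1 < Fintype.card V) :
    ∃ u v, G.Adj u v ∧ Fintype.card V ≤ 3 * #(G.side u v) + 1 ∧
      2 * #(G.side u v) ≤ Fintype.card V := by
  have : Nontrivial V := Fintype.one_lt_card_iff_nontrivial.1 hV
  obtain ⟨a⟩ := hG.connected.nonempty
  obtain ⟨b, hab⟩ := hG.connected.preconnected.exists_adj_of_nontrivial a
  let P : Finset (V × V) := {q | G.Adj q.1 q.2 ∧ 2 * #(G.side q.1 q.2) ≤ Fintype.card V}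
  have hP : P.Nonempty := by
    have := card_side_add_card_side hG.isAcyclic hG.connected hab
    by_cases h : 2 * #(G.side a b) ≤ Fintype.card V
    · exact ⟨(a, b), by simp [P, hab, h]⟩
    · exact ⟨(b, a), by simp only [P, mem_filter, mem_univ, true_and]; exact ⟨hab.symm, by omega⟩⟩
  obtain ⟨⟨u, v⟩, huvP, hmax⟩ := P.exists_max_image (fun q ↦ #(G.side q.1 q.2)) hP
  simp only [P, mem_filter, mem_univ, true_and] at huvP
  refine ⟨u, v, huvP.1, not_lt.1 fun hsmall ↦ ?_, huvP.2⟩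
  obtain ⟨a, b, hab, hab2, hlt⟩ := exists_adj_card_side_lt hG (hdeg u) huvP.1 hsmall
  exact (hmax (a, b) (by simp [P, hab, hab2])).not_gt hlt

lemma sum_adj_abs_sub_rpow_le_of_cut {A : Finset V} {a b : V}
    (hcut : ∀ x y, G.Adj x y → x ∈ A → y ∉ A → x = a ∧ y = b) {p : ℝ} (hp : 0 < p) :
    ∑ x, ∑ y, (if G.Adj x y then
      |(if x ∈ A then 1 else -1) - (if y ∈ A then (1 : ℝ) else -1)| ^ p else 0) ≤ 2 * 2 ^ p := by
  let f : V → ℝ := fun x ↦ if x ∈ A then 1 else -1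
  let g : V × V → ℝ := fun q ↦ if G.Adj q.1 q.2 then |f q.1 - f q.2| ^ p else 0
  have hg_le : ∀ q, g q ≤ 2 ^ p := by
    intro q
    have : |f q.1 - f q.2| ≤ 2 := by
      simp only [f]; split_ifs <;> norm_num
    simp only [g]
    split_ifs
    · exact Real.rpow_le_rpow (abs_nonneg _) this hp.le
    · positivity
  have hg_zero : ∀ q ∉ ({(a, b), (b, a)} : Finset (V × V)), g q = 0 := by
    rintro ⟨x, y⟩ hq
    simp only [mem_insert, mem_singleton, Prod.mk.injEq, not_or, not_and] at hq
    simp only [g]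
    split_ifs with hxy
    · have : f x = f y := by
        by_cases hx : x ∈ A <;> by_cases hy : y ∈ A
        · simp [f, hx, hy]
        · exact absurd (hcut x y hxy hx hy).2 (hq.1 (hcut x y hxy hx hy).1)
        · exact absurd (hcut y x hxy.symm hy hx).1 (hq.2 (hcut y x hxy.symm hy hx).2)
        · simp [f, hx, hy]
      rw [this, sub_self, abs_zero, Real.zero_rpow hp.ne']
    · rfl
  calc _ = ∑ q, g q := (Fintype.sum_prod_type' _).symm
    _ = ∑ q ∈ {(a, b), (b, a)}, g q := (sum_subset (subset_univ _) fun q _ ↦ hg_zero q).symm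
    _ ≤ #({(a, b), (b, a)} : Finset (V × V)) • 2 ^ p := sum_le_card_nsmul _ _ _ fun q _ ↦ hg_le q
    _ ≤ 2 * 2 ^ p := by
      rw [nsmul_eq_mul]
      gcongr
      exact_mod_cast card_le_two

end SimpleGraph

section LevelSets

variable {V : Type*} [DecidableEq V]

lemma ncard_setOf_ite_eq_one (A : Finset V) :
    {x | (if x ∈ A then (1 : ℝ) else -1) = 1}.ncard = #A := by
  rw [← Set.ncard_coe_finset A]
  congr 1
  ext x
  by_cases hx : x ∈ A <;> norm_num [hx]

lemma ncard_setOf_ite_eq_neg_one [Fintype V] (A : Finset V) :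
    {x | (if x ∈ A then (1 : ℝ) else -1) = -1}.ncard = #Aᶜ := by
  rw [← Set.ncard_coe_finset Aᶜ]
  congr 1
  ext x
  by_cases hx : x ∈ A <;> norm_num [hx]

end LevelSets

/-- On a finite tree of maximum degree at most `3` (a subtree of the `3`-regular tree)
with `r ≥ 4` vertices there is a `{-1,0,1}`-valued function whose `p`-energy (counted
over ordered adjacent pairs, twice the edge sum) is at most `2 · 3 · 2^p` and whose
level sets `f⁻¹(±1)` each have at least `r/4 - 1` vertices. -/
theorem stmt12 {V : Type*} [Fintype V] [DecidableEq V] (G : SimpleGraph V)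
    [DecidableRel G.Adj] (hG : G.IsTree) (hdeg : ∀ v, G.degree v ≤ 3)
    (r : ℕ) (hr : Fintype.card V = r) (h4 : 4 ≤ r) :
    ∃ f : V → ℝ, (∀ v, f v = -1 ∨ f v = 0 ∨ f v = 1) ∧
      (∀ p : ℝ, 1 ≤ p →
        ∑ x, ∑ y, (if G.Adj x y then |f x - f y| ^ p else 0) ≤ 2 * (3 * 2 ^ p)) ∧
      (r : ℝ) / 4 - 1 ≤ ({v | f v = 1}.ncard : ℝ) ∧
      (r : ℝ) / 4 - 1 ≤ ({v | f v = -1}.ncard : ℝ) := by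
  subst hr
  obtain ⟨u, v, huv, hlarge, hsmall⟩ := G.exists_adj_balanced_side hG hdeg (by omega)
  set A := G.side u v
  refine ⟨fun x ↦ if x ∈ A then 1 else -1, fun x ↦ ?_, fun p hp ↦ ?_, ?_, ?_⟩
  · by_cases hx : x ∈ A <;> simp [hx]
  · have hcut : ∀ x y, G.Adj x y → x ∈ A → y ∉ A → x = v ∧ y = u := fun _ _ ↦
      G.eq_of_adj_of_mem_side_of_notMem hG.isAcyclic huv
    have := G.sum_adj_abs_sub_rpow_le_of_cut hcut (by linarith : (0 : ℝ) < p)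
    have : (0 : ℝ) < 2 ^ p := by positivity
    linarith
  · rw [ncard_setOf_ite_eq_one]
    have : (Fintype.card V : ℝ) ≤ 3 * #A + 1 := by exact_mod_cast hlarge
    linarith
  · rw [ncard_setOf_ite_eq_neg_one]
    have : (#A + #Aᶜ : ℝ) = Fintype.card V := by exact_mod_cast card_add_card_compl A
    have : 2 * (#A : ℝ) ≤ Fintype.card V := by exact_mod_cast hsmall
    linarith
end
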